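/- arXiv:1606.06248 — 2 statements merged into one kernel-verified Lean document; each statement's English description precedes it below -/
import Mathlib

section
/- Let 0 ≤ k < n and let ν be a (not necessarily strict) partition which, as a straight shape, is balanced with height and width both equal to k. Set λ := δ_n + ν + (n−1−k)^n. Then the distributive lattice [∅, λ]_shift = J(P_λ^shift) is tCDE, i.e. E(μ; ddeg) = n/2 for every toggle-symmetric distribution μ on J(P_λ^shift); in particular its edge density E(uni; ddeg) equals n/2. -/
open scoped Classical

noncomputable section

namespace CDEPaper

/-- The down-degree of `p`: the number of elements that `p` covers, as a real number. -/
def ddeg {α : Type*} [PartialOrder α] (p : α) : ℝ :=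
  (Nat.card {q : α // q ⋖ p} : ℝ)

/-- The expectation of the statistic `f` with respect to the weights `μ`. -/
def expect {α : Type*} (μ : α → ℝ) (f : α → ℝ) : ℝ :=
  ∑ᶠ p, μ p * f p

/-- The uniform distribution on a finite type. -/
def uni (α : Type*) : α → ℝ :=
  fun _ => (Nat.card α : ℝ)⁻¹

/-- `μ` is a probability distribution. -/
def IsProbDist {α : Type*} (μ : α → ℝ) : Prop :=
  (∀ x, 0 ≤ μ x) ∧ (∑ᶠ x, μ x) = 1

/-- The `k`-chain distribution: each `p` gets probability proportional to the number of
`k`-chains (strictly increasing sequences `c₀ < c₁ < ⋯ < c_k`) passing through `p`. -/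
def chainDist (α : Type*) [PartialOrder α] (k : ℕ) : α → ℝ := fun p =>
  (Nat.card {c : Fin (k + 1) → α // StrictMono c ∧ ∃ i, c i = p} : ℝ) /
    (((k : ℝ) + 1) * (Nat.card {c : Fin (k + 1) → α // StrictMono c} : ℝ))

/-- The `m`-multichain distribution: each `p` gets probability proportional to the number of
`m`-multichains (weakly increasing sequences) passing through `p`. -/
def mchainDist (α : Type*) [PartialOrder α] (m : ℕ) : α → ℝ := fun p =>
  (Nat.card {c : Fin (m + 1) → α // Monotone c ∧ ∃ i, c i = p} : ℝ) /
    (Nat.card {cq : (Fin (m + 1) → α) × α // Monotone cq.1 ∧ ∃ i, cq.1 i = cq.2} : ℝ)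

/-- The modified `m`-multichain distribution: each `p` gets probability proportional to the
number of pairs `(c, i)` where `c` is an `m`-multichain and `c i = p`. -/
def mhatDist (α : Type*) [PartialOrder α] (m : ℕ) : α → ℝ := fun p =>
  (Nat.card {ci : (Fin (m + 1) → α) × Fin (m + 1) // Monotone ci.1 ∧ ci.1 ci.2 = p} : ℝ) /
    (((m : ℝ) + 1) * (Nat.card {c : Fin (m + 1) → α // Monotone c} : ℝ))

/-- The maximal chain distribution: each `p` gets probability proportional to the number of
maximal chains passing through `p`. -/
def maxchainDist (α : Type*) [PartialOrder α] : α → ℝ := fun p =>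
  (Nat.card {C : Set α // IsMaxChain (· ≤ ·) C ∧ p ∈ C} : ℝ) /
    (Nat.card {Cq : Set α × α // IsMaxChain (· ≤ ·) Cq.1 ∧ Cq.2 ∈ Cq.1} : ℝ)

/-- A poset has coincidental down-degree expectations (CDE). -/
def IsCDE (α : Type*) [PartialOrder α] : Prop :=
  expect (maxchainDist α) ddeg = expect (uni α) ddeg

/-- A poset is mCDE: the expected down-degree with respect to the `k`-chain distribution agrees
with the uniform expected down-degree for every `k = 0, 1, …, r` (i.e. every `k` for which a
`k`-chain exists). -/
def IsMCDE (α : Type*) [PartialOrder α] : Prop :=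
  ∀ k : ℕ, (∃ c : Fin (k + 1) → α, StrictMono c) →
    expect (chainDist α k) ddeg = expect (uni α) ddeg

/-- The distributive lattice `J(P)` of order ideals (lower sets) of a poset, ordered by
inclusion. -/
abbrev OIdeal (α : Type*) [PartialOrder α] : Type _ := {I : Set α // IsLowerSet I}

/-- The indicator statistic that `p` can be toggled into the order ideal `I`. -/
def Tplus {α : Type*} [PartialOrder α] (p : α) (I : OIdeal α) : ℝ :=
  if p ∉ I.1 ∧ IsLowerSet (I.1 ∪ {p}) then 1 else 0

/-- The indicator statistic that `p` can be toggled out of the order ideal `I`. -/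
def Tminus {α : Type*} [PartialOrder α] (p : α) (I : OIdeal α) : ℝ :=
  if p ∈ I.1 ∧ IsLowerSet (I.1 \ {p}) then 1 else 0

/-- A distribution on `J(P)` is toggle-symmetric if for every `p` the probability that `p` can
be toggled in equals the probability that `p` can be toggled out. -/
def ToggleSymmetric {α : Type*} [PartialOrder α] (μ : OIdeal α → ℝ) : Prop :=
  ∀ p : α, expect μ (Tplus p) = expect μ (Tminus p)

/-- `J(P)` is toggle-CDE (tCDE): every toggle-symmetric probability distribution has the same
expected down-degree as the uniform distribution. -/
def IsTCDE (α : Type*) [PartialOrder α] : Prop :=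
  ∀ μ : OIdeal α → ℝ, IsProbDist μ → ToggleSymmetric μ →
    expect μ ddeg = expect (uni (OIdeal α)) ddeg

end CDEPaper
namespace CDEPaper

/-! ### Skew shapes and shifted shapes -/

/-- The boxes of the skew shape `λ/ν` of height `a`, in matrix coordinates with 1-based rows
and columns: row `i` (for `1 ≤ i ≤ a`) consists of the boxes `[i,j]` with `ν i < j ≤ λ i`.
The poset structure is the one induced from the componentwise (product) order on `ℕ × ℕ`. -/
def skewCells (a : ℕ) (lam nu : ℕ → ℕ) : Set (ℕ × ℕ) :=
  {b | 1 ≤ b.1 ∧ b.1 ≤ a ∧ nu b.1 < b.2 ∧ b.2 ≤ lam b.1}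

/-- The boxes of the shifted Young diagram of a strict partition `λ` of length `l`:
the boxes `[i,j]` with `1 ≤ i ≤ l` and `i ≤ j ≤ λ i + i - 1`.  The poset structure is the one
induced from the componentwise (product) order on `ℕ × ℕ`. -/
def shiftCells (l : ℕ) (lam : ℕ → ℕ) : Set (ℕ × ℕ) :=
  {b | 1 ≤ b.1 ∧ b.1 ≤ l ∧ b.1 ≤ b.2 ∧ b.2 < lam b.1 + b.1}

/-- The shifted rook statistic `R^shift_{ij}` on order ideals of (the poset of) `S`. -/
def Rshift (S : Set (ℕ × ℕ)) (i j : ℕ) (I : OIdeal ↥S) : ℝ :=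
  (∑ᶠ (q : ↥S), if (q : ℕ × ℕ).1 ≤ i ∧ (q : ℕ × ℕ).2 ≤ j then Tplus q I else 0)
    + (∑ᶠ (q : ↥S), if i ≤ (q : ℕ × ℕ).1 ∧ j ≤ (q : ℕ × ℕ).2 then Tminus q I else 0)
    - (∑ᶠ (q : ↥S),
        if (q : ℕ × ℕ).1 < i ∧ (q : ℕ × ℕ).2 < j ∧ (q : ℕ × ℕ).1 < (q : ℕ × ℕ).2 then
          Tminus q I else 0)
    - (∑ᶠ (q : ↥S),
        if i < (q : ℕ × ℕ).1 ∧ j < (q : ℕ × ℕ).2 ∧ (q : ℕ × ℕ).1 < (q : ℕ × ℕ).2 then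
          Tplus q I else 0)

/-- The shifted diagram of `λ` (of length `l`) has an outward corner indexed by `i'`
(a north step followed by an east step on the southeast border, occurring at the lattice point
`(i', λ (i'+1) + i')`) if and only if `1 ≤ i' < l` and `λ i' ≥ λ (i'+1) + 2`. -/
def IsCorner (l : ℕ) (lam : ℕ → ℕ) (i' : ℕ) : Prop :=
  1 ≤ i' ∧ i' + 1 ≤ l ∧ lam (i' + 1) + 2 ≤ lam i'

/-- An order ideal `I ∈ J(P_λ^shift)` contains the outward corner indexed by `i'`
(i.e. the lattice path of `I` contains both steps of the corner):  equivalently, `I` contains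
both the last box `[i'+1, λ(i'+1)+i']` of row `i'+1` and the box `[i', λ(i'+1)+i'+1]`. -/
def ContainsCorner (l : ℕ) (lam : ℕ → ℕ) (I : OIdeal ↥(shiftCells l lam)) (i' : ℕ) : Prop :=
  (∃ q : ↥(shiftCells l lam), (q : ℕ × ℕ) = (i' + 1, lam (i' + 1) + i') ∧ q ∈ I.1) ∧
  (∃ q : ↥(shiftCells l lam), (q : ℕ × ℕ) = (i', lam (i' + 1) + i' + 1) ∧ q ∈ I.1)

/-- A (not necessarily strict) partition `ν` (with parts `ν 1 ≥ ν 2 ≥ ⋯`) which, viewed as a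
straight shape, is balanced with height and width both equal to `k`:  it has exactly `k`
nonzero parts, its first part is `k`, and every outward corner of its boundary path (which
occurs at the point `(i, ν (i+1))` whenever `ν i > ν (i+1)`) lies on the anti-diagonal
`i + j = k` of the `k × k` square. -/
def BalancedSquare (k : ℕ) (nu : ℕ → ℕ) : Prop :=
  (∀ i, 1 ≤ i → nu (i + 1) ≤ nu i) ∧
  (∀ i, 1 ≤ i → i ≤ k → 1 ≤ nu i) ∧
  (∀ i, k < i → nu i = 0) ∧
  nu 1 = k ∧
  (∀ i, 1 ≤ i → i + 1 ≤ k → nu (i + 1) < nu i → i + nu (i + 1) = k)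

/-- The poset `P_{a,1,1,d}`: a bottom chain `w₁ < ⋯ < w_a`, two incomparable elements `x, y`
covering `w_a`, and a top chain `z₁ < ⋯ < z_d` with `z₁` covering both `x` and `y`.
It is realized inside `ℕ × ℕ` (with the componentwise order) as
`w_i = (i,i)`, `x = (a+1, a)`, `y = (a, a+1)`, `z_j = (a+j, a+j)`. -/
def Pa11d (a d : ℕ) : Set (ℕ × ℕ) :=
  {p | (1 ≤ p.1 ∧ p.1 ≤ a ∧ p.2 = p.1) ∨ p = (a + 1, a) ∨ p = (a, a + 1) ∨
    (∃ j, 1 ≤ j ∧ j ≤ d ∧ p = (a + j, a + j))}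

/-! ### Shifted set-valued tableaux

Letters of the primed alphabet `1 < 1' < 2 < 2' < ⋯` are encoded as natural numbers:
the letter `m : ℕ` has value `m / 2 + 1` and is primed iff `m` is odd
(so `0 ↦ 1, 1 ↦ 1', 2 ↦ 2, 3 ↦ 2', …`); the order on letters is the usual order on `ℕ`. -/

/-- The value of a letter. -/
def letterVal (m : ℕ) : ℕ := m / 2 + 1

/-- `T` is a shifted set-valued tableau of shape given by the box set `S`:  each box gets a
finite nonempty set of letters, all entries of a box weakly precede all entries of any strictly
larger box, each unprimed letter appears at most once in each column, and each primed letter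
appears at most once in each row. -/
def IsSSVT (S : Set (ℕ × ℕ)) (T : ↥S → Finset ℕ) : Prop :=
  (∀ u, (T u).Nonempty) ∧
  (∀ u v : ↥S, u < v → ∀ x ∈ T u, ∀ y ∈ T v, x ≤ y) ∧
  (∀ u v : ↥S, u ≠ v → (u : ℕ × ℕ).2 = (v : ℕ × ℕ).2 →
    ∀ m : ℕ, m % 2 = 0 → ¬(m ∈ T u ∧ m ∈ T v)) ∧
  (∀ u v : ↥S, u ≠ v → (u : ℕ × ℕ).1 = (v : ℕ × ℕ).1 →
    ∀ m : ℕ, m % 2 = 1 → ¬(m ∈ T u ∧ m ∈ T v))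

/-- `T` is standard: distinct entry occurrences have distinct values, and the values used are
exactly `1, 2, …, N` where `N` is the total number of entries. -/
def IsStandardT (S : Set (ℕ × ℕ)) (T : ↥S → Finset ℕ) : Prop :=
  (∀ u v : ↥S, ∀ x ∈ T u, ∀ y ∈ T v, letterVal x = letterVal y → u = v ∧ x = y) ∧
  (∀ m : ℕ, 1 ≤ m → m ≤ ∑ᶠ (u : ↥S), (T u).card → ∃ u : ↥S, ∃ x ∈ T u, letterVal x = m)

/-- `T` is barely set-valued: exactly one box has two entries; all other boxes have one. -/
def IsBarelySetValued (S : Set (ℕ × ℕ)) (T : ↥S → Finset ℕ) : Prop :=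
  ∃ u₀ : ↥S, (T u₀).card = 2 ∧ ∀ u : ↥S, u ≠ u₀ → (T u).card = 1

/-- `T` is unprimed: no primed letters appear. -/
def IsUnprimed (S : Set (ℕ × ℕ)) (T : ↥S → Finset ℕ) : Prop :=
  ∀ u : ↥S, ∀ x ∈ T u, x % 2 = 0

/-- `g^λ`: the number of unprimed standard shifted tableaux of shape `λ`. -/
def gShift (l : ℕ) (lam : ℕ → ℕ) : ℕ :=
  Nat.card {T : ↥(shiftCells l lam) → Finset ℕ //
    IsSSVT (shiftCells l lam) T ∧ IsStandardT (shiftCells l lam) T ∧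
    (∀ u, (T u).card = 1) ∧ IsUnprimed (shiftCells l lam) T}

/-- The number of standard shifted barely set-valued tableaux of shape `λ`. -/
def numBarelySVT (l : ℕ) (lam : ℕ → ℕ) : ℕ :=
  Nat.card {T : ↥(shiftCells l lam) → Finset ℕ //
    IsSSVT (shiftCells l lam) T ∧ IsStandardT (shiftCells l lam) T ∧
    IsBarelySetValued (shiftCells l lam) T}

/-! ### Toggles, rowmotion, orbits -/

/-- The toggle `τ_p` on order ideals. -/
def toggle {α : Type*} [PartialOrder α] (p : α) (I : OIdeal α) : OIdeal α :=
  if h : p ∉ I.1 ∧ IsLowerSet (I.1 ∪ {p}) then ⟨I.1 ∪ {p}, h.2⟩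
  else if h' : p ∈ I.1 ∧ IsLowerSet (I.1 \ {p}) then ⟨I.1 \ {p}, h'.2⟩
  else I

/-- The composition of the toggles along a list, applied head first. -/
def applyToggles {α : Type*} [PartialOrder α] (L : List α) (I : OIdeal α) : OIdeal α :=
  L.foldl (fun J p => toggle p J) I

/-- The forward orbit of `x` under `Φ` (for invertible `Φ` on a finite set, the orbit). -/
def orbit {β : Type*} (Φ : β → β) (x : β) : Set β := {y | ∃ n : ℕ, Φ^[n] x = y}

/-- The probability distribution that is uniform on the orbit of `x` under `Φ` and zero
outside of it. -/
def orbitDist {β : Type*} (Φ : β → β) (x : β) : β → ℝ := fun y =>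
  if y ∈ orbit Φ x then (Nat.card ↥(orbit Φ x) : ℝ)⁻¹ else 0

/-- Rowmotion on order ideals: `I ↦ {x : x ≤ y for some minimal element y of P \ I}`. -/
def rowmotion {α : Type*} [PartialOrder α] (I : OIdeal α) : OIdeal α :=
  ⟨{x | ∃ y, (y ∉ I.1 ∧ ∀ z, z ∉ I.1 → z ≤ y → z = y) ∧ x ≤ y}, by
    intro a b hba ha
    obtain ⟨y, hy, hay⟩ := ha
    exact ⟨y, hy, le_trans hba hay⟩⟩

/-- The antichain cardinality statistic `I ↦ #max(I)`. -/
def antichainCard {α : Type*} [PartialOrder α] (I : OIdeal α) : ℝ :=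
  (Nat.card {p : α // p ∈ I.1 ∧ ∀ q, q ∈ I.1 → p ≤ q → p = q} : ℝ)

end CDEPaper

namespace CDEPaper

/-!
For any weights `c` on the boxes put `F = ∑_q ((1 + c q) T⁺_q + (1 - c q) T⁻_q)`. Since
`ddeg = ∑_q T⁻_q` and toggle-symmetry means `E(μ; T⁺_q) = E(μ; T⁻_q)`, every toggle-symmetric `μ`
has `E(μ; F) = 2 E(μ; ddeg)`, whatever `c` is; so it suffices to choose `c` making `F` constant.

For the shifted shape take `c(i, j) = 2n - i - j` off the diagonal and `c(i, i) = n - i`. Then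
`F(∅) = 1 + c(1, 1) = n`. Adding a box `p = (i, j)` to an ideal changes `F` by `-2 c(p)` and by
changes at the four neighbours of `p`, which pair up as right/up and down/left. In each pair exactly
one of the two changes happens, depending on whether the box diagonally between them lies in the
ideal, and either way the pair contributes `2n - i - j` (a diagonal box only has the right/up pair).
A neighbour missing from the shape would have contributed `0`: at the end of the first row and at an
outward corner because balancedness puts `p` on the anti-diagonal `i + j = 2n`, and below the last
diagonal box because `1 + c(n + 1, n + 1) = 0`.
-/

section ToggleStatistics

variable {α : Type*} [PartialOrder α]

theorem isLowerSet_union_singleton_iff {s : Set α} (hs : IsLowerSet s) {p : α} :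
    IsLowerSet (s ∪ {p}) ↔ ∀ q < p, q ∈ s := by
  constructor
  · intro h q hq
    rcases h hq.le (Or.inr rfl) with hqs | rfl
    · exact hqs
    · exact absurd hq (lt_irrefl q)
  · rintro h b a hab (hb | rfl)
    · exact Or.inl (hs hab hb)
    · exact hab.lt_or_eq.imp (h a) id

theorem isLowerSet_diff_singleton_iff {s : Set α} (hs : IsLowerSet s) {p : α} :
    IsLowerSet (s \ {p}) ↔ ∀ q, p < q → q ∉ s := by
  constructor
  · intro h q hpq hq
    exact (h hpq.le ⟨hq, hpq.ne'⟩).2 rfl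
  · rintro h b a hab ⟨hb, hbp⟩
    refine ⟨hs hab hb, fun hap => ?_⟩
    rw [Set.mem_singleton_iff] at hap hbp
    subst hap
    exact h b (lt_of_le_of_ne hab (Ne.symm hbp)) hb

theorem tplus_eq_ite (p : α) (I : OIdeal α) :
    Tplus p I = if p ∉ I.1 ∧ ∀ q < p, q ∈ I.1 then 1 else 0 := by
  simp only [Tplus, isLowerSet_union_singleton_iff I.2]

theorem tminus_eq_ite (p : α) (I : OIdeal α) :
    Tminus p I = if p ∈ I.1 ∧ ∀ q, p < q → q ∉ I.1 then 1 else 0 := by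
  simp only [Tminus, isLowerSet_diff_singleton_iff I.2]

theorem tplus_eq_zero_of_mem {p : α} {I : OIdeal α} (hp : p ∈ I.1) : Tplus p I = 0 := by
  rw [tplus_eq_ite, if_neg]
  exact fun h => h.1 hp

theorem tminus_eq_zero_of_notMem {p : α} {I : OIdeal α} (hp : p ∉ I.1) : Tminus p I = 0 := by
  rw [tminus_eq_ite, if_neg]
  exact fun h => hp h.1

theorem tplus_eq_zero_of_lt {p q : α} {I : OIdeal α} (hqp : q < p) (hq : q ∉ I.1) :
    Tplus p I = 0 := by
  rw [tplus_eq_ite, if_neg]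
  exact fun h => hq (h.2 q hqp)

theorem tminus_eq_zero_of_lt {p q : α} {I : OIdeal α} (hpq : p < q) (hq : q ∈ I.1) :
    Tminus p I = 0 := by
  rw [tminus_eq_ite, if_neg]
  exact fun h => h.2 q hpq hq

variable {I J : OIdeal α} {p : α}

theorem mem_insert_iff_of_eq (hI : I.1 = insert p J.1) {q : α} : q ∈ I.1 ↔ q = p ∨ q ∈ J.1 := by
  rw [hI, Set.mem_insert_iff]

theorem mem_of_eq_insert (hI : I.1 = insert p J.1) : p ∈ I.1 :=
  (mem_insert_iff_of_eq hI).2 (Or.inl rfl)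

theorem mem_of_lt_of_eq_insert (hI : I.1 = insert p J.1) {q : α} (hq : q < p) : q ∈ J.1 :=
  ((mem_insert_iff_of_eq hI).1 (I.2 hq.le (mem_of_eq_insert hI))).resolve_left hq.ne

theorem notMem_of_le_of_notMem {q : α} (hp : p ∉ J.1) (hpq : p ≤ q) : q ∉ J.1 :=
  fun hq => hp (J.2 hpq hq)

theorem tplus_eq_one_of_eq_insert (hp : p ∉ J.1) (hI : I.1 = insert p J.1) : Tplus p J = 1 := by
  rw [tplus_eq_ite, if_pos ⟨hp, fun r hr => mem_of_lt_of_eq_insert hI hr⟩]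

theorem tminus_eq_one_of_eq_insert (hp : p ∉ J.1) (hI : I.1 = insert p J.1) : Tminus p I = 1 := by
  rw [tminus_eq_ite, if_pos]
  refine ⟨mem_of_eq_insert hI, fun r hr hrI => ?_⟩
  rcases (mem_insert_iff_of_eq hI).1 hrI with rfl | hrJ
  · exact lt_irrefl r hr
  · exact notMem_of_le_of_notMem hp hr.le hrJ

theorem tplus_eq_zero_of_eq_insert_of_not_covBy (hp : p ∉ J.1) (hI : I.1 = insert p J.1) {q : α}
    (hpq : p < q) (hcov : ¬p ⋖ q) : Tplus q I = 0 := by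
  obtain ⟨r, hpr, hrq⟩ := (not_covBy_iff hpq).1 hcov
  refine tplus_eq_zero_of_lt hrq fun hrI => ?_
  rcases (mem_insert_iff_of_eq hI).1 hrI with rfl | hrJ
  · exact lt_irrefl r hpr
  · exact notMem_of_le_of_notMem hp hpr.le hrJ

theorem tminus_eq_zero_of_eq_insert_of_not_covBy (hI : I.1 = insert p J.1) {q : α} (hqp : q < p)
    (hcov : ¬q ⋖ p) : Tminus q J = 0 := by
  obtain ⟨r, hqr, hrp⟩ := (not_covBy_iff hqp).1 hcov
  exact tminus_eq_zero_of_lt hqr (mem_of_lt_of_eq_insert hI hrp)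

theorem tplus_eq_of_eq_insert (hI : I.1 = insert p J.1) {q : α} (hqp : q ≠ p) (hpq : ¬p < q) :
    Tplus q I = Tplus q J := by
  simp only [tplus_eq_ite, mem_insert_iff_of_eq hI, hqp, false_or]
  congr 2
  exact propext ⟨fun h r hr => (h r hr).resolve_left fun hrp => hpq (hrp ▸ hr),
    fun h r hr => Or.inr (h r hr)⟩

theorem tminus_eq_of_eq_insert (hI : I.1 = insert p J.1) {q : α} (hqp : q ≠ p) (hpq : ¬q < p) :
    Tminus q I = Tminus q J := by
  simp only [tminus_eq_ite, mem_insert_iff_of_eq hI, hqp, false_or, not_or]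
  congr 2
  exact propext ⟨fun h r hr => (h r hr).2, fun h r hr => ⟨fun hrp => hpq (hrp ▸ hr), h r hr⟩⟩

theorem weightedToggle_eq_of_eq_insert (c : α → ℝ) (hp : p ∉ J.1) (hI : I.1 = insert p J.1)
    (q : α) :
    (1 + c q) * Tplus q I + (1 - c q) * Tminus q I =
      (1 + c q) * Tplus q J + (1 - c q) * Tminus q J + (if q = p then -2 * c p else 0)
        + (if p ⋖ q then (1 + c q) * Tplus q I else 0)
        - (if q ⋖ p then (1 - c q) * Tminus q J else 0) := by
  have hpI : p ∈ I.1 := mem_of_eq_insert hI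
  by_cases hqp : q = p
  · subst hqp
    simp only [tplus_eq_one_of_eq_insert hp hI, tminus_eq_one_of_eq_insert hp hI,
      tplus_eq_zero_of_mem hpI, tminus_eq_zero_of_notMem hp, CovBy.irrefl.irrefl, if_true, if_false]
    ring
  by_cases hpq : p < q
  · have hqJ : q ∉ J.1 := notMem_of_le_of_notMem hp hpq.le
    have hqI : q ∉ I.1 := by simp [mem_insert_iff_of_eq hI, hqp, hqJ]
    rw [tplus_eq_zero_of_lt hpq hp, tminus_eq_zero_of_notMem hqJ, tminus_eq_zero_of_notMem hqI,
      if_neg hqp, if_neg (show ¬q ⋖ p from fun h => lt_asymm h.lt hpq)]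
    by_cases hcov : p ⋖ q
    · rw [if_pos hcov]
      ring
    · rw [if_neg hcov, tplus_eq_zero_of_eq_insert_of_not_covBy hp hI hpq hcov]
      ring
  by_cases hqp' : q < p
  · have hqJ : q ∈ J.1 := mem_of_lt_of_eq_insert hI hqp'
    rw [tplus_eq_zero_of_mem hqJ, tplus_eq_zero_of_mem ((mem_insert_iff_of_eq hI).2 (Or.inr hqJ)),
      tminus_eq_zero_of_lt hqp' hpI, if_neg hqp,
      if_neg (show ¬p ⋖ q from fun h => lt_asymm h.lt hqp')]
    by_cases hcov : q ⋖ p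
    · rw [if_pos hcov]
      ring
    · rw [if_neg hcov, tminus_eq_zero_of_eq_insert_of_not_covBy hI hqp' hcov]
      ring
  rw [tplus_eq_of_eq_insert hI hqp hpq, tminus_eq_of_eq_insert hI hqp hqp', if_neg hqp,
    if_neg (show ¬p ⋖ q from fun h => hpq h.lt), if_neg (show ¬q ⋖ p from fun h => hqp' h.lt)]
  ring

theorem tplus_eq_ite_of_eq_insert (hp : p ∉ J.1) (hI : I.1 = insert p J.1) {q : α} (hpq : p < q) :
    Tplus q I = if ∀ r < q, ¬r ≤ p → r ∈ J.1 then 1 else 0 := by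
  have hpI : p ∈ I.1 := mem_of_eq_insert hI
  have hqI : q ∉ I.1 := by
    rw [mem_insert_iff_of_eq hI, not_or]
    exact ⟨hpq.ne', notMem_of_le_of_notMem hp hpq.le⟩
  rw [tplus_eq_ite]
  congr 1
  refine propext ⟨fun h r hrq hrp => ?_, fun h => ⟨hqI, fun r hrq => ?_⟩⟩
  · exact ((mem_insert_iff_of_eq hI).1 (h.2 r hrq)).resolve_left fun hr => hrp hr.le
  · by_cases hrp : r ≤ p
    · exact I.2 hrp hpI
    · exact (mem_insert_iff_of_eq hI).2 (Or.inr (h r hrq hrp))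

theorem tminus_eq_ite_of_eq_insert (hp : p ∉ J.1) (hI : I.1 = insert p J.1) {q : α} (hqp : q < p) :
    Tminus q J = if ∀ r, q < r → ¬p ≤ r → r ∉ J.1 then 1 else 0 := by
  rw [tminus_eq_ite]
  congr 1
  refine propext ⟨fun h r hqr _ => h.2 r hqr,
    fun h => ⟨mem_of_lt_of_eq_insert hI hqp, fun r hqr => ?_⟩⟩
  by_cases hpr : p ≤ r
  · exact notMem_of_le_of_notMem hp hpr
  · exact h r hqr hpr

theorem OIdeal.diff_singleton_covBy {I : OIdeal α} {q : α} (hq : q ∈ I.1)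
    (hlow : IsLowerSet (I.1 \ {q})) : (⟨I.1 \ {q}, hlow⟩ : OIdeal α) ⋖ I := by
  refine ⟨Subtype.coe_lt_coe.1 (Set.sdiff_singleton_ssubset.2 hq), fun K hK hKI => ?_⟩
  obtain ⟨x, hxI, hxK⟩ := Set.exists_of_ssubset (Subtype.coe_lt_coe.2 hKI)
  have hxq : x = q := by_contra fun hxq => hxK (hK.le ⟨hxI, hxq⟩)
  refine hK.not_ge fun y hy => ⟨hKI.le hy, fun hyq => hxK ?_⟩
  rwa [hxq, ← Set.mem_singleton_iff.1 hyq]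

section Finite

variable [Finite α]

def weightedToggleSum (c : α → ℝ) (I : OIdeal α) : ℝ :=
  ∑ᶠ q, ((1 + c q) * Tplus q I + (1 - c q) * Tminus q I)

theorem weightedToggleSum_eq_of_eq_insert (c : α → ℝ) (hp : p ∉ J.1) (hI : I.1 = insert p J.1) :
    weightedToggleSum c I = weightedToggleSum c J - 2 * c p
      + ∑ᶠ q, (if p ⋖ q then (1 + c q) * Tplus q I else 0)
      - ∑ᶠ q, (if q ⋖ p then (1 - c q) * Tminus q J else 0) := by
  cases nonempty_fintype α
  simp only [weightedToggleSum, finsum_eq_sum_of_fintype,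
    weightedToggle_eq_of_eq_insert c hp hI, Finset.sum_add_distrib, Finset.sum_sub_distrib,
    Finset.sum_ite_eq', Finset.mem_univ, if_true]
  ring

theorem OIdeal.induction_on_insert {motive : OIdeal α → Prop}
    (empty : motive ⟨∅, isLowerSet_empty⟩)
    (step : ∀ (I J : OIdeal α) (p : α), p ∉ J.1 → I.1 = insert p J.1 → motive J → motive I)
    (I : OIdeal α) : motive I := by
  induction hI : I.1.ncard using Nat.strong_induction_on generalizing I with
  | _ m ih =>
  rcases I.1.eq_empty_or_nonempty with hemp | hne
  · exact (Subtype.ext hemp : I = ⟨∅, isLowerSet_empty⟩) ▸ empty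
  obtain ⟨p, hpI, hmax⟩ := (Set.toFinite I.1).exists_maximal hne
  have hJ : IsLowerSet (I.1 \ {p}) :=
    (isLowerSet_diff_singleton_iff I.2).2 fun q hpq hq => hpq.not_ge (hmax hq hpq.le)
  refine step I ⟨I.1 \ {p}, hJ⟩ p (fun h => h.2 rfl) (Set.insert_sdiff_self_of_mem hpI).symm
    (ih _ ?_ _ rfl)
  exact hI ▸ Set.ncard_sdiff_singleton_lt_of_mem hpI

theorem finsum_ite_eq_natCard {β : Type*} [Finite β] (P : β → Prop) [DecidablePred P] :
    ∑ᶠ x, (if P x then (1 : ℝ) else 0) = Nat.card {x // P x} := by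
  cases nonempty_fintype β
  rw [finsum_eq_sum_of_fintype, Finset.sum_boole, Nat.card_eq_fintype_card, Fintype.card_subtype]

/-- A lower cover of `I` removes a maximal element of `I \ K`, which is maximal in `I`. -/
theorem OIdeal.exists_eq_diff_singleton_of_covBy {K I : OIdeal α} (hK : K ⋖ I) :
    ∃ q ∈ I.1, ∃ hlow : IsLowerSet (I.1 \ {q}), K = ⟨I.1 \ {q}, hlow⟩ := by
  obtain ⟨q, ⟨hqI, hqK⟩, hmax⟩ := (Set.toFinite (I.1 \ K.1)).exists_maximal
    (Set.nonempty_of_ssubset (Subtype.coe_lt_coe.2 hK.lt))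
  have hlow : IsLowerSet (I.1 \ {q}) := (isLowerSet_diff_singleton_iff I.2).2 fun r hqr hrI =>
    hqK (K.2 hqr.le (by_contra fun hrK => hqr.not_ge (hmax ⟨hrI, hrK⟩ hqr.le)))
  refine ⟨q, hqI, hlow, ?_⟩
  have hKle : K ≤ ⟨I.1 \ {q}, hlow⟩ := fun y hy => ⟨hK.le hy, fun hyq => hqK (hyq ▸ hy)⟩
  rcases hK.eq_or_eq hKle (fun y hy => hy.1) with h | h
  · exact h.symm
  · have hq : q ∈ I.1 \ {q} := by rw [show I.1 \ {q} = I.1 from congrArg Subtype.val h]; exact hqI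
    exact absurd rfl hq.2

theorem ddeg_eq_finsum_tminus (I : OIdeal α) : ddeg I = ∑ᶠ q, Tminus q I := by
  let remove (q : {q // q ∈ I.1 ∧ IsLowerSet (I.1 \ {q})}) : {K : OIdeal α // K ⋖ I} :=
    ⟨⟨I.1 \ {q.1}, q.2.2⟩, OIdeal.diff_singleton_covBy q.2.1 q.2.2⟩
  have hinj : Function.Injective remove := by
    intro a b hab
    by_contra hne
    have hsets : I.1 \ {a.1} = I.1 \ {b.1} := congrArg (fun K => K.1.1) hab
    have : a.1 ∈ I.1 \ {b.1} := ⟨a.2.1, fun h => hne (Subtype.ext h)⟩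
    exact (hsets ▸ this).2 rfl
  have hsurj : Function.Surjective remove := fun ⟨K, hK⟩ => by
    obtain ⟨q, hqI, hlow, rfl⟩ := OIdeal.exists_eq_diff_singleton_of_covBy hK
    exact ⟨⟨q, hqI, hlow⟩, rfl⟩
  rw [ddeg, show (fun q => Tminus q I) = fun q => if q ∈ I.1 ∧ IsLowerSet (I.1 \ {q}) then 1 else 0
    from rfl, finsum_ite_eq_natCard, Nat.card_eq_of_bijective remove ⟨hinj, hsurj⟩]

theorem finsum_tplus_eq_finsum_tminus (p : α) : ∑ᶠ I, Tplus p I = ∑ᶠ I, Tminus p I := by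
  let e : {I : OIdeal α // p ∉ I.1 ∧ IsLowerSet (I.1 ∪ {p})} ≃
      {I : OIdeal α // p ∈ I.1 ∧ IsLowerSet (I.1 \ {p})} :=
    { toFun := fun I => ⟨⟨I.1.1 ∪ {p}, I.2.2⟩, Or.inr rfl, by
        simpa only [Set.union_singleton, Set.insert_sdiff_self_of_notMem I.2.1] using I.1.2⟩
      invFun := fun I => ⟨⟨I.1.1 \ {p}, I.2.2⟩, fun h => h.2 rfl, by
        simpa only [Set.union_singleton, Set.insert_sdiff_self_of_mem I.2.1] using I.1.2⟩
      left_inv := fun I => Subtype.ext <| Subtype.ext <| by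
        simp only [Set.union_singleton, Set.insert_sdiff_self_of_notMem I.2.1]
      right_inv := fun I => Subtype.ext <| Subtype.ext <| by
        simp only [Set.union_singleton, Set.insert_sdiff_self_of_mem I.2.1] }
  simp only [Tplus, Tminus]
  rw [finsum_ite_eq_natCard, finsum_ite_eq_natCard, Nat.card_congr e]

instance : Nonempty (OIdeal α) := ⟨⟨∅, isLowerSet_empty⟩⟩

theorem isProbDist_uni (β : Type*) [Finite β] [Nonempty β] : IsProbDist (uni β) := by
  cases nonempty_fintype β
  refine ⟨fun _ => by unfold uni; positivity, ?_⟩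
  rw [finsum_eq_sum_of_fintype]
  simp [uni, Nat.card_eq_fintype_card]

theorem toggleSymmetric_uni : ToggleSymmetric (uni (OIdeal α)) := by
  cases nonempty_fintype (OIdeal α)
  intro p
  have h := finsum_tplus_eq_finsum_tminus p
  simp only [finsum_eq_sum_of_fintype] at h
  simp only [expect, uni, finsum_eq_sum_of_fintype, ← Finset.mul_sum, h]

theorem expect_ddeg_eq_half {c : α → ℝ} {C : ℝ} (hF : ∀ I, weightedToggleSum c I = C)
    {μ : OIdeal α → ℝ} (hμ : IsProbDist μ) (hts : ToggleSymmetric μ) :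
    expect μ ddeg = C / 2 := by
  cases nonempty_fintype α
  cases nonempty_fintype (OIdeal α)
  have hsym (q : α) : ∑ I, μ I * Tplus q I = ∑ I, μ I * Tminus q I := by
    simpa only [expect, finsum_eq_sum_of_fintype] using hts q
  have hμ1 : ∑ I, μ I = 1 := by simpa only [finsum_eq_sum_of_fintype] using hμ.2
  have hC : C = ∑ q, 2 * ∑ I, μ I * Tminus q I := calc
    C = ∑ I, μ I * weightedToggleSum c I := by simp only [hF, ← Finset.sum_mul, hμ1, one_mul]
    _ = ∑ q, ((1 + c q) * ∑ I, μ I * Tplus q I + (1 - c q) * ∑ I, μ I * Tminus q I) := by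
      simp only [weightedToggleSum, finsum_eq_sum_of_fintype, Finset.mul_sum]
      rw [Finset.sum_comm]
      refine Finset.sum_congr rfl fun q _ => ?_
      rw [← Finset.sum_add_distrib]
      exact Finset.sum_congr rfl fun I _ => by ring
    _ = ∑ q, 2 * ∑ I, μ I * Tminus q I := by
      simp only [hsym]
      exact Finset.sum_congr rfl fun q _ => by ring
  have hd : expect μ ddeg = ∑ q, ∑ I, μ I * Tminus q I := by
    simp only [expect, finsum_eq_sum_of_fintype, ddeg_eq_finsum_tminus, Finset.mul_sum]
    exact Finset.sum_comm
  rw [hd, hC, ← Finset.mul_sum]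
  ring

end Finite

end ToggleStatistics

def zeroExtend {β : Type*} (S : Set β) (f : S → ℝ) (x : β) : ℝ :=
  if h : x ∈ S then f ⟨x, h⟩ else 0

theorem finsum_eq_sum_zeroExtend {β : Type*} {S : Set β} (f : S → ℝ) (t : Finset β)
    (ht : ∀ q, f q ≠ 0 → (q : β) ∈ t) : ∑ᶠ q, f q = ∑ x ∈ t, zeroExtend S f x := by
  have hf (q : S) : f q = zeroExtend S f q := (dif_pos q.2 : zeroExtend S f q = f ⟨q.1, q.2⟩).symm
  rw [finsum_congr hf, finsum_set_coe_eq_finsum_mem]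
  refine finsum_mem_eq_sum_of_inter_support_eq _ (Set.ext fun x => ?_)
  simp only [Set.mem_inter_iff, Function.mem_support, Finset.mem_coe, zeroExtend]
  refine ⟨fun ⟨hx, h⟩ => ⟨?_, h⟩, fun ⟨_, h⟩ => ⟨?_, h⟩⟩
  · rw [dif_pos hx] at h
    exact ht _ h
  · by_contra hx
    exact h (dif_neg hx)

/-- The shifted counterpart of a balanced shape: `λ` is strict with `n` parts, its first row
spans the columns `1, …, 2n - 1`, and every outward corner `(i, λ (i+1) + i)` lies on the
anti-diagonal `i + j = 2n - 1`. -/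
structure ShiftedBalanced (n : ℕ) (lam : ℕ → ℕ) : Prop where
  one_le : 1 ≤ n
  one_le_part : ∀ i, 1 ≤ i → i ≤ n → 1 ≤ lam i
  part_succ_lt : ∀ i, 1 ≤ i → i + 1 ≤ n → lam (i + 1) < lam i
  first_part : lam 1 + 1 = 2 * n
  corner : ∀ i, IsCorner n lam i → lam (i + 1) + 2 * i + 1 = 2 * n

theorem ShiftedBalanced.of_balancedSquare {n k : ℕ} {nu lam : ℕ → ℕ} (hkn : k < n)
    (hbal : BalancedSquare k nu)
    (hlam : ∀ i, 1 ≤ i → i ≤ n → lam i = (n + 1 - i) + nu i + (n - 1 - k)) :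
    ShiftedBalanced n lam := by
  obtain ⟨hmono, -, hzero, hfirst, hcorner⟩ := hbal
  refine ⟨by omega, fun i h1 h2 => ?_, fun i h1 h2 => ?_, ?_, fun i ⟨h1, h2, hgap⟩ => ?_⟩
  · have := hlam i h1 h2
    omega
  · have := hlam i h1 (by omega)
    have := hlam (i + 1) (by omega) h2
    have := hmono i h1
    omega
  · have := hlam 1 le_rfl (by omega)
    omega
  · have e1 := hlam i h1 (by omega)
    have e2 := hlam (i + 1) (by omega) h2
    have hnu : nu (i + 1) < nu i := by omega
    rcases lt_trichotomy (i + 1) (k + 1) with hik | hik | hik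
    · have := hcorner i h1 (by omega) hnu
      omega
    · have := hzero (i + 1) (by omega)
      omega
    · have := hzero i (by omega)
      have := hzero (i + 1) (by omega)
      omega

section ShiftedShape

variable {n : ℕ} {lam : ℕ → ℕ}

@[simp]
theorem mk_mem_shiftCells {a b : ℕ} :
    (a, b) ∈ shiftCells n lam ↔ 1 ≤ a ∧ a ≤ n ∧ a ≤ b ∧ b < lam a + a :=
  Iff.rfl

theorem shiftCells_finite (n : ℕ) (lam : ℕ → ℕ) : (shiftCells n lam).Finite := by
  refine ((Set.finite_Icc 1 n).prod
    (Set.finite_Iio (∑ i ∈ Finset.range (n + 1), lam i + n))).subset ?_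
  rintro ⟨a, b⟩ h
  obtain ⟨h1, h2, -, h4⟩ := mk_mem_shiftCells.1 h
  have : lam a ≤ ∑ i ∈ Finset.range (n + 1), lam i :=
    Finset.single_le_sum (fun _ _ => Nat.zero_le _) (Finset.mem_range.2 (by omega))
  exact ⟨⟨h1, h2⟩, show b < _ by omega⟩

instance (n : ℕ) (lam : ℕ → ℕ) : Finite (shiftCells n lam) := (shiftCells_finite n lam).to_subtype

theorem ShiftedBalanced.row_end_le (sh : ShiftedBalanced n lam) {a b : ℕ} (ha : 1 ≤ a)
    (hab : a ≤ b) (hb : b ≤ n) : lam b + b ≤ lam a + a := by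
  induction b, hab using Nat.le_induction with
  | base => rfl
  | succ m hm ih =>
    have := sh.part_succ_lt m (by omega) hb
    have := ih (by omega)
    omega

theorem ShiftedBalanced.mem_of_le_fst (sh : ShiftedBalanced n lam) {a b a' : ℕ}
    (h : (a, b) ∈ shiftCells n lam) (h1 : 1 ≤ a') (h2 : a' ≤ a) : (a', b) ∈ shiftCells n lam := by
  obtain ⟨-, ha, hab, hb⟩ := mk_mem_shiftCells.1 h
  have := sh.row_end_le h1 h2 ha
  exact mk_mem_shiftCells.2 ⟨h1, by omega, by omega, by omega⟩

theorem mem_of_le_snd {a b b' : ℕ} (h : (a, b) ∈ shiftCells n lam) (h1 : a ≤ b') (h2 : b' ≤ b) :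
    (a, b') ∈ shiftCells n lam := by
  obtain ⟨ha1, ha, -, hb⟩ := mk_mem_shiftCells.1 h
  exact mk_mem_shiftCells.2 ⟨ha1, ha, h1, by omega⟩

theorem ShiftedBalanced.diag_mem (sh : ShiftedBalanced n lam) {i : ℕ} (hi : 1 ≤ i) (hin : i ≤ n) :
    (i, i) ∈ shiftCells n lam :=
  mk_mem_shiftCells.2 ⟨hi, hin, le_rfl, by have := sh.one_le_part i hi hin; omega⟩

theorem ShiftedBalanced.succ_eq_of_first_row_end (sh : ShiftedBalanced n lam) {j : ℕ}
    (h : (1, j) ∈ shiftCells n lam) (hout : (1, j + 1) ∉ shiftCells n lam) : j + 1 = 2 * n := by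
  obtain ⟨-, -, -, hj⟩ := mk_mem_shiftCells.1 h
  simp only [mk_mem_shiftCells, not_and, not_lt] at hout
  have := hout le_rfl sh.one_le (by omega)
  have := sh.first_part
  omega

theorem ShiftedBalanced.add_eq_of_outwardCorner (sh : ShiftedBalanced n lam) {i j : ℕ}
    (hup : (i, j + 1) ∈ shiftCells n lam) (hleft : (i + 1, j) ∈ shiftCells n lam)
    (hout : (i + 1, j + 1) ∉ shiftCells n lam) : i + j + 1 = 2 * n := by
  obtain ⟨hi, -, -, hup⟩ := mk_mem_shiftCells.1 hup
  obtain ⟨-, hi1, hij, hleft⟩ := mk_mem_shiftCells.1 hleft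
  simp only [mk_mem_shiftCells, not_and, not_lt] at hout
  have := hout (by omega) hi1 (by omega)
  have := sh.corner i ⟨hi, hi1, by omega⟩
  omega

theorem ShiftedBalanced.covBy_iff (sh : ShiftedBalanced n lam) {q r : shiftCells n lam} :
    q ⋖ r ↔ (r : ℕ × ℕ) = (q.1.1, q.1.2 + 1) ∨ (r : ℕ × ℕ) = (q.1.1 + 1, q.1.2) := by
  obtain ⟨⟨a, b⟩, hq⟩ := q
  obtain ⟨⟨c, d⟩, hr⟩ := r
  simp only [CovBy, Subtype.mk_lt_mk, Prod.mk_lt_mk, Prod.mk.injEq, Subtype.forall, Prod.forall]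
  constructor
  · rintro ⟨hlt, hmin⟩
    by_contra hne
    obtain ⟨ha, -, hab, -⟩ := mk_mem_shiftCells.1 hq
    obtain ⟨-, -, hcd, -⟩ := mk_mem_shiftCells.1 hr
    rcases Nat.lt_or_ge a c with hac | hac
    · rcases Nat.lt_or_ge b d with hbd | hbd
      · exact hmin a d (sh.mem_of_le_fst hr (by omega) hac.le) (by omega) (by omega)
      · exact hmin (a + 1) d (sh.mem_of_le_fst hr (by omega) (by omega)) (by omega) (by omega)
    · exact hmin c (b + 1) (mem_of_le_snd hr (by omega) (by omega)) (by omega) (by omega)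
  · rintro (⟨rfl, rfl⟩ | ⟨rfl, rfl⟩) <;> exact ⟨by omega, fun x y _ => by omega⟩

variable {I J : OIdeal (shiftCells n lam)} {i j : ℕ}

def shiftWeight (n : ℕ) (x : ℕ × ℕ) : ℝ :=
  if x.1 = x.2 then (n : ℝ) - x.1 else 2 * (n : ℝ) - x.1 - x.2

theorem shiftWeight_of_ne {a b : ℕ} (h : a ≠ b) : shiftWeight n (a, b) = 2 * (n : ℝ) - a - b :=
  if_neg h

theorem shiftWeight_self (a : ℕ) : shiftWeight n (a, a) = (n : ℝ) - a :=
  if_pos rfl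

section Neighbours

-- Row `0` contains no box, so for `i = 1` the truncated `i - 1` below names no box.
variable (hpS : (i, j) ∈ shiftCells n lam)

theorem ShiftedBalanced.tplus_right (sh : ShiftedBalanced n lam) (hp : ⟨(i, j), hpS⟩ ∉ J.1)
    (hI : I.1 = insert ⟨(i, j), hpS⟩ J.1) (hx : (i, j + 1) ∈ shiftCells n lam) :
    Tplus ⟨(i, j + 1), hx⟩ I = if 2 ≤ i → (i - 1, j + 1) ∈ Subtype.val '' J.1 then 1 else 0 := by
  rw [tplus_eq_ite_of_eq_insert hp hI (by simp only [Subtype.mk_lt_mk, Prod.mk_lt_mk]; omega)]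
  congr 1
  refine propext ⟨fun h hi => ?_, fun h r hr hrp => ?_⟩
  · have hg := sh.mem_of_le_fst hx (a' := i - 1) (by omega) (by omega)
    refine ⟨⟨_, hg⟩, h _ ?_ ?_, rfl⟩ <;> simp only [Subtype.mk_lt_mk, Prod.mk_lt_mk,
      Subtype.mk_le_mk, Prod.mk_le_mk] <;> omega
  · obtain ⟨⟨a, b⟩, hrS⟩ := r
    simp only [Subtype.mk_lt_mk, Prod.mk_lt_mk, Subtype.mk_le_mk, Prod.mk_le_mk] at hr hrp
    obtain ⟨ha, -⟩ := mk_mem_shiftCells.1 hrS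
    obtain ⟨g, hgJ, hg⟩ := h (by omega)
    refine J.2 ?_ hgJ
    rw [← Subtype.coe_le_coe, hg, Prod.mk_le_mk]
    omega

theorem tminus_up (hp : ⟨(i, j), hpS⟩ ∉ J.1) (hI : I.1 = insert ⟨(i, j), hpS⟩ J.1)
    (hx : (i - 1, j) ∈ shiftCells n lam) :
    Tminus ⟨(i - 1, j), hx⟩ J = if (i - 1, j + 1) ∈ Subtype.val '' J.1 then 0 else 1 := by
  obtain ⟨hi, -, hij, -⟩ := mk_mem_shiftCells.1 hpS
  rw [tminus_eq_ite_of_eq_insert hp hI (by simp only [Subtype.mk_lt_mk, Prod.mk_lt_mk]; omega),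
    ← ite_not ((i - 1, j + 1) ∈ Subtype.val '' J.1)]
  congr 1
  refine propext ⟨fun h ⟨g, hgJ, hg⟩ => ?_, fun h r hqr hpr hrJ => ?_⟩
  · obtain ⟨⟨a, b⟩, hgS⟩ := g
    simp only [Prod.mk.injEq] at hg
    refine h _ ?_ ?_ hgJ <;> simp only [Subtype.mk_lt_mk, Prod.mk_lt_mk,
      Subtype.mk_le_mk, Prod.mk_le_mk] <;> omega
  · obtain ⟨⟨a, b⟩, hrS⟩ := r
    simp only [Subtype.mk_lt_mk, Prod.mk_lt_mk, Subtype.mk_le_mk, Prod.mk_le_mk] at hqr hpr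
    obtain rfl : a = i - 1 := by omega
    have hg := mem_of_le_snd hrS (b' := j + 1) (by omega) (by omega)
    exact h ⟨⟨_, hg⟩, J.2 (by simp only [Subtype.mk_le_mk, Prod.mk_le_mk]; omega) hrJ, rfl⟩

theorem tplus_down (hp : ⟨(i, j), hpS⟩ ∉ J.1) (hI : I.1 = insert ⟨(i, j), hpS⟩ J.1)
    (hx : (i + 1, j) ∈ shiftCells n lam) :
    Tplus ⟨(i + 1, j), hx⟩ I
      = if i + 1 < j → (i + 1, j - 1) ∈ Subtype.val '' J.1 then 1 else 0 := by
  rw [tplus_eq_ite_of_eq_insert hp hI (by simp only [Subtype.mk_lt_mk, Prod.mk_lt_mk]; omega)]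
  congr 1
  refine propext ⟨fun h hij => ?_, fun h r hr hrp => ?_⟩
  · have hg := mem_of_le_snd hx (b' := j - 1) (by omega) (by omega)
    refine ⟨⟨_, hg⟩, h _ ?_ ?_, rfl⟩ <;> simp only [Subtype.mk_lt_mk, Prod.mk_lt_mk,
      Subtype.mk_le_mk, Prod.mk_le_mk] <;> omega
  · obtain ⟨⟨a, b⟩, hrS⟩ := r
    simp only [Subtype.mk_lt_mk, Prod.mk_lt_mk, Subtype.mk_le_mk, Prod.mk_le_mk] at hr hrp
    obtain ⟨-, -, hab, -⟩ := mk_mem_shiftCells.1 hrS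
    obtain ⟨g, hgJ, hg⟩ := h (by omega)
    refine J.2 ?_ hgJ
    rw [← Subtype.coe_le_coe, hg, Prod.mk_le_mk]
    omega

theorem ShiftedBalanced.tminus_left (sh : ShiftedBalanced n lam) (hp : ⟨(i, j), hpS⟩ ∉ J.1)
    (hI : I.1 = insert ⟨(i, j), hpS⟩ J.1) (hx : (i, j - 1) ∈ shiftCells n lam) :
    Tminus ⟨(i, j - 1), hx⟩ J = if (i + 1, j - 1) ∈ Subtype.val '' J.1 then 0 else 1 := by
  obtain ⟨hi, -, hij, -⟩ := mk_mem_shiftCells.1 hx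
  rw [tminus_eq_ite_of_eq_insert hp hI (by simp only [Subtype.mk_lt_mk, Prod.mk_lt_mk]; omega),
    ← ite_not ((i + 1, j - 1) ∈ Subtype.val '' J.1)]
  congr 1
  refine propext ⟨fun h ⟨g, hgJ, hg⟩ => ?_, fun h r hqr hpr hrJ => ?_⟩
  · obtain ⟨⟨a, b⟩, hgS⟩ := g
    simp only [Prod.mk.injEq] at hg
    refine h _ ?_ ?_ hgJ <;> simp only [Subtype.mk_lt_mk, Prod.mk_lt_mk,
      Subtype.mk_le_mk, Prod.mk_le_mk] <;> omega
  · obtain ⟨⟨a, b⟩, hrS⟩ := r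
    simp only [Subtype.mk_lt_mk, Prod.mk_lt_mk, Subtype.mk_le_mk, Prod.mk_le_mk] at hqr hpr
    obtain rfl : b = j - 1 := by omega
    have hg := sh.mem_of_le_fst hrS (a' := i + 1) (by omega) (by omega)
    exact h ⟨⟨_, hg⟩, J.2 (by simp only [Subtype.mk_le_mk, Prod.mk_le_mk]; omega) hrJ, rfl⟩

theorem ShiftedBalanced.zeroExtend_right (sh : ShiftedBalanced n lam) (hp : ⟨(i, j), hpS⟩ ∉ J.1)
    (hI : I.1 = insert ⟨(i, j), hpS⟩ J.1) :
    zeroExtend _ (fun q => (1 + shiftWeight n q) * Tplus q I) (i, j + 1)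
      = if 2 ≤ i → (i - 1, j + 1) ∈ Subtype.val '' J.1 then 2 * (n : ℝ) - i - j else 0 := by
  obtain ⟨hi, -, hij, -⟩ := mk_mem_shiftCells.1 hpS
  by_cases hr : (i, j + 1) ∈ shiftCells n lam
  · rw [zeroExtend, dif_pos hr, sh.tplus_right hpS hp hI hr, shiftWeight_of_ne (by omega)]
    split_ifs <;> push_cast <;> ring
  rw [zeroExtend, dif_neg hr]
  split_ifs with hg
  · rcases Nat.lt_or_ge i 2 with h2 | h2
    · obtain rfl : i = 1 := by omega
      have : (j : ℝ) + 1 = 2 * n := by exact_mod_cast sh.succ_eq_of_first_row_end hpS hr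
      push_cast
      linarith
    · obtain ⟨i, rfl⟩ : ∃ i', i = i' + 1 := ⟨i - 1, by omega⟩
      obtain ⟨g, -, hgc⟩ := hg h2
      simp only [Nat.add_sub_cancel] at hgc
      have := sh.add_eq_of_outwardCorner (hgc ▸ g.2) hpS hr
      have : ((i + 1 : ℕ) : ℝ) + j = 2 * n := by exact_mod_cast (by omega : i + 1 + j = 2 * n)
      linarith
  · rfl

theorem ShiftedBalanced.zeroExtend_up (sh : ShiftedBalanced n lam) (hp : ⟨(i, j), hpS⟩ ∉ J.1)
    (hI : I.1 = insert ⟨(i, j), hpS⟩ J.1) :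
    zeroExtend _ (fun q => (1 - shiftWeight n q) * Tminus q J) (i - 1, j)
      = if 2 ≤ i → (i - 1, j + 1) ∈ Subtype.val '' J.1 then 0 else (i : ℝ) + j - 2 * n := by
  obtain ⟨hi, -, hij, -⟩ := mk_mem_shiftCells.1 hpS
  by_cases hu : (i - 1, j) ∈ shiftCells n lam
  · obtain ⟨hi', -⟩ := mk_mem_shiftCells.1 hu
    rw [zeroExtend, dif_pos hu, tminus_up hpS hp hI hu, shiftWeight_of_ne (by omega),
      Nat.cast_sub (by omega : 1 ≤ i)]
    by_cases hg : (i - 1, j + 1) ∈ Subtype.val '' J.1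
    · rw [if_pos hg, if_pos fun _ => hg]
      ring
    · rw [if_neg hg, if_neg fun h => hg (h (by omega))]
      push_cast
      ring
  · rw [zeroExtend, dif_neg hu,
      if_pos fun h => absurd (sh.mem_of_le_fst hpS (by omega) (by omega)) hu]

theorem ShiftedBalanced.zeroExtend_down (sh : ShiftedBalanced n lam) (hp : ⟨(i, j), hpS⟩ ∉ J.1)
    (hI : I.1 = insert ⟨(i, j), hpS⟩ J.1) (hij : i < j) :
    zeroExtend _ (fun q => (1 + shiftWeight n q) * Tplus q I) (i + 1, j)
      = if i + 1 < j → (i + 1, j - 1) ∈ Subtype.val '' J.1 then 1 + shiftWeight n (i + 1, j)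
        else 0 := by
  obtain ⟨hi, hin, -, -⟩ := mk_mem_shiftCells.1 hpS
  by_cases hd : (i + 1, j) ∈ shiftCells n lam
  · rw [zeroExtend, dif_pos hd, tplus_down hpS hp hI hd]
    split_ifs <;> ring
  rw [zeroExtend, dif_neg hd]
  split_ifs with hg
  · rcases (Nat.succ_le_of_lt hij).eq_or_lt with rfl | hij'
    · obtain rfl : i = n := by
        by_contra
        exact hd (sh.diag_mem (by omega) (by omega))
      rw [shiftWeight_self]
      push_cast
      ring
    · obtain ⟨j, rfl⟩ : ∃ j', j = j' + 1 := ⟨j - 1, by omega⟩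
      obtain ⟨g, -, hgc⟩ := hg hij'
      simp only [Nat.add_sub_cancel] at hgc
      have := sh.add_eq_of_outwardCorner hpS (hgc ▸ g.2) hd
      rw [shiftWeight_of_ne (by omega)]
      have : (i : ℝ) + j + 1 = 2 * n := by exact_mod_cast this
      push_cast
      linarith
  · rfl

theorem ShiftedBalanced.zeroExtend_left (sh : ShiftedBalanced n lam) (hp : ⟨(i, j), hpS⟩ ∉ J.1)
    (hI : I.1 = insert ⟨(i, j), hpS⟩ J.1) (hij : i < j) :
    zeroExtend _ (fun q => (1 - shiftWeight n q) * Tminus q J) (i, j - 1)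
      = if (i + 1, j - 1) ∈ Subtype.val '' J.1 then 0 else 1 - shiftWeight n (i, j - 1) := by
  have hl : (i, j - 1) ∈ shiftCells n lam := mem_of_le_snd hpS (by omega) (by omega)
  rw [zeroExtend, dif_pos hl, sh.tminus_left hpS hp hI hl]
  split_ifs <;> ring

theorem ShiftedBalanced.right_sub_up (sh : ShiftedBalanced n lam) (hp : ⟨(i, j), hpS⟩ ∉ J.1)
    (hI : I.1 = insert ⟨(i, j), hpS⟩ J.1) :
    zeroExtend _ (fun q => (1 + shiftWeight n q) * Tplus q I) (i, j + 1)
      - zeroExtend _ (fun q => (1 - shiftWeight n q) * Tminus q J) (i - 1, j)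
      = 2 * (n : ℝ) - i - j := by
  rw [sh.zeroExtend_right hpS hp hI, sh.zeroExtend_up hpS hp hI]
  split_ifs <;> ring

theorem ShiftedBalanced.down_sub_left (sh : ShiftedBalanced n lam) (hp : ⟨(i, j), hpS⟩ ∉ J.1)
    (hI : I.1 = insert ⟨(i, j), hpS⟩ J.1) :
    zeroExtend _ (fun q => (1 + shiftWeight n q) * Tplus q I) (i + 1, j)
      - zeroExtend _ (fun q => (1 - shiftWeight n q) * Tminus q J) (i, j - 1)
      = if i = j then 0 else 2 * (n : ℝ) - i - j := by
  obtain ⟨hi, -, hij, -⟩ := mk_mem_shiftCells.1 hpS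
  rcases hij.eq_or_lt with rfl | hij
  · rw [zeroExtend, zeroExtend, dif_neg (by simp only [mk_mem_shiftCells]; omega),
      dif_neg (by simp only [mk_mem_shiftCells]; omega), if_pos rfl, sub_zero]
  rw [sh.zeroExtend_down hpS hp hI hij, sh.zeroExtend_left hpS hp hI hij, if_neg hij.ne]
  obtain ⟨j, rfl⟩ : ∃ j', j = j' + 1 := ⟨j - 1, by omega⟩
  simp only [Nat.add_sub_cancel]
  rcases (Nat.lt_succ_iff.1 hij).eq_or_lt with rfl | hij
  · have hdiag : (i + 1, i) ∉ Subtype.val '' J.1 := fun ⟨g, _, hg⟩ => by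
      have := mk_mem_shiftCells.1 (hg ▸ g.2)
      omega
    rw [if_pos fun h => absurd h (lt_irrefl _), if_neg hdiag, shiftWeight_self, shiftWeight_self]
    push_cast
    ring
  rw [shiftWeight_of_ne (a := i + 1) (b := j + 1) (by omega),
    shiftWeight_of_ne (a := i) (b := j) (by omega)]
  by_cases hg : (i + 1, j) ∈ Subtype.val '' J.1
  · rw [if_pos fun _ => hg, if_pos hg]
    push_cast
    ring
  · rw [if_neg fun h => hg (h (by omega)), if_neg hg]
    push_cast
    ring

end Neighbours

theorem ShiftedBalanced.finsum_upperCovers (sh : ShiftedBalanced n lam)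
    (hpS : (i, j) ∈ shiftCells n lam) (f : shiftCells n lam → ℝ) :
    ∑ᶠ q, (if ⟨(i, j), hpS⟩ ⋖ q then f q else 0)
      = zeroExtend _ f (i, j + 1) + zeroExtend _ f (i + 1, j) := by
  rw [finsum_eq_sum_zeroExtend _ {(i, j + 1), (i + 1, j)}, Finset.sum_pair (by simp)]
  · congr 1 <;> exact dite_congr rfl (fun _ => if_pos (sh.covBy_iff.2 (by simp)))
      (fun _ => rfl)
  · intro q hq
    rcases sh.covBy_iff.1 (by_contra fun h => hq (if_neg h)) with h | h <;> simp [h]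

theorem ShiftedBalanced.finsum_lowerCovers (sh : ShiftedBalanced n lam)
    (hpS : (i, j) ∈ shiftCells n lam) (f : shiftCells n lam → ℝ) :
    ∑ᶠ q, (if q ⋖ ⟨(i, j), hpS⟩ then f q else 0)
      = zeroExtend _ f (i - 1, j) + zeroExtend _ f (i, j - 1) := by
  obtain ⟨hi, -, hij, -⟩ := mk_mem_shiftCells.1 hpS
  rw [finsum_eq_sum_zeroExtend _ {(i - 1, j), (i, j - 1)},
    Finset.sum_pair (by simp only [ne_eq, Prod.mk.injEq]; omega)]
  · congr 1 <;> refine dite_congr rfl (fun _ => if_pos (sh.covBy_iff.2 ?_)) (fun _ => rfl) <;>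
      simp only [Prod.mk.injEq, and_true, true_and] <;> omega
  · rintro ⟨⟨a, b⟩, hq⟩ hcov
    rcases sh.covBy_iff.1 (by_contra fun h => hcov (if_neg h)) with h | h <;>
      simp only [Prod.mk.injEq] at h <;> simp only [Finset.mem_insert, Finset.mem_singleton,
        Prod.mk.injEq] <;> omega

theorem ShiftedBalanced.weightedToggleSum_eq_of_eq_insert (sh : ShiftedBalanced n lam)
    {p : shiftCells n lam} (hp : p ∉ J.1) (hI : I.1 = insert p J.1) :
    weightedToggleSum (fun q : shiftCells n lam => shiftWeight n q) I
      = weightedToggleSum (fun q : shiftCells n lam => shiftWeight n q) J := by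
  obtain ⟨⟨i, j⟩, hpS⟩ := p
  have hright := sh.right_sub_up hpS hp hI
  have hdown := sh.down_sub_left hpS hp hI
  rw [CDEPaper.weightedToggleSum_eq_of_eq_insert _ hp hI, sh.finsum_upperCovers hpS,
    sh.finsum_lowerCovers hpS]
  split_ifs at hdown with hij
  · subst hij
    rw [shiftWeight_self]
    linarith
  · rw [shiftWeight_of_ne hij]
    linarith

theorem ShiftedBalanced.weightedToggleSum_empty (sh : ShiftedBalanced n lam) :
    weightedToggleSum (fun q : shiftCells n lam => shiftWeight n q) ⟨∅, isLowerSet_empty⟩ = n := by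
  have h11 : (1, 1) ∈ shiftCells n lam :=
    sh.diag_mem le_rfl sh.one_le
  have hmin : ∀ r < (⟨(1, 1), h11⟩ : shiftCells n lam), r ∈ (∅ : Set (shiftCells n lam)) := by
    rintro ⟨⟨a, b⟩, hr⟩ hlt
    obtain ⟨ha, -, hab, -⟩ := mk_mem_shiftCells.1 hr
    simp only [Subtype.mk_lt_mk, Prod.mk_lt_mk] at hlt
    omega
  rw [weightedToggleSum, finsum_eq_single _ ⟨(1, 1), h11⟩]
  · rw [tplus_eq_ite, if_pos ⟨Set.notMem_empty _, hmin⟩,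
      tminus_eq_zero_of_notMem (Set.notMem_empty _), shiftWeight_self]
    push_cast
    ring
  · rintro ⟨⟨a, b⟩, hq⟩ hne
    obtain ⟨ha, -, hab, -⟩ := mk_mem_shiftCells.1 hq
    have hlt : (⟨(1, 1), h11⟩ : shiftCells n lam) < ⟨(a, b), hq⟩ := by
      simp only [ne_eq, Subtype.mk.injEq, Prod.mk.injEq] at hne
      simp only [Subtype.mk_lt_mk, Prod.mk_lt_mk]
      omega
    rw [tplus_eq_zero_of_lt hlt (Set.notMem_empty _), tminus_eq_zero_of_notMem (Set.notMem_empty _)]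
    ring

theorem ShiftedBalanced.weightedToggleSum_eq (sh : ShiftedBalanced n lam)
    (I : OIdeal (shiftCells n lam)) :
    weightedToggleSum (fun q : shiftCells n lam => shiftWeight n q) I = n :=
  OIdeal.induction_on_insert sh.weightedToggleSum_empty
    (fun _ _ _ hp hI hJ => (sh.weightedToggleSum_eq_of_eq_insert hp hI).trans hJ) I

end ShiftedShape

theorem statement13_general (n k : ℕ) (hkn : k < n) (nu : ℕ → ℕ) (hbal : BalancedSquare k nu)
    (lam : ℕ → ℕ)
    (hlam : ∀ i, 1 ≤ i → i ≤ n → lam i = (n + 1 - i) + nu i + (n - 1 - k)) :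
    (∀ μ : OIdeal ↥(shiftCells n lam) → ℝ, IsProbDist μ → ToggleSymmetric μ →
        expect μ ddeg = (n : ℝ) / 2) ∧
      expect (uni (OIdeal ↥(shiftCells n lam))) ddeg = (n : ℝ) / 2 := by
  have hF := (ShiftedBalanced.of_balancedSquare hkn hbal hlam).weightedToggleSum_eq
  exact ⟨fun μ hμ hts => expect_ddeg_eq_half hF hμ hts,
    expect_ddeg_eq_half hF (isProbDist_uni _) toggleSymmetric_uni⟩

/-- Theorem `thm:shiftyounglatcde`(2).  Let `0 ≤ k < n` and let `ν` be a
(not necessarily strict) partition which, as a straight shape, is balanced with height and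
width both equal to `k`.  Set `λ := δ_n + ν + (n-1-k)^n`.  Then the distributive lattice
`[∅, λ]_shift = J(P_λ^shift)` is tCDE: `E(μ; ddeg) = n/2` for every toggle-symmetric
probability distribution `μ`; in particular its edge density is `n/2`. -/
theorem statement13 (n k : ℕ) (hkn : k < n) (nu : ℕ → ℕ) (hbal : BalancedSquare k nu)
    (lam : ℕ → ℕ)
    (hlam : ∀ i, 1 ≤ i → i ≤ n → lam i = (n + 1 - i) + nu i + (n - 1 - k))
    (hlam0 : ∀ i, n < i → lam i = 0) :
    (∀ μ : OIdeal ↥(shiftCells n lam) → ℝ, IsProbDist μ → ToggleSymmetric μ →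
        expect μ ddeg = (n : ℝ) / 2) ∧
      expect (uni (OIdeal ↥(shiftCells n lam))) ddeg = (n : ℝ) / 2 :=
  statement13_general n k hkn nu hbal lam hlam

end CDEPaper
end
end

section
/- Let P be a finite ranked poset and σ a permutation of {0, 1, ..., r} where r is the maximum rank of P. Let O be an orbit of the rank-permuted rowmotion Φ_{row(σ)} acting on J(P). Then the probability distribution on J(P) that is uniform on O and zero outside of O is toggle-symmetric. Equivalently, for every p ∈ P, the signed toggleability statistic T_p := T⁺_p − T⁻_p has average 0 along every Φ_{row(σ)}-orbit. -/
open scoped Classical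

noncomputable section

/-!
Fix `p`. The elements covered by `p` all have rank `rk p - 1`, so within one application of
`Φ = Φ_{row(σ)}` they are toggled either all before `p` or all after `p`; likewise for the
elements covering `p`. If they are toggled before `p`, then `p` can be toggled into `I` exactly
when `Φ` adds `p` to `I`; if after, then `p` can be toggled into `Φ I` exactly when `Φ` removes
`p` from `I`. Since `Φ` permutes each orbit, in both cases the orbit sum of `T⁺_p` counts the
steps of the orbit at which `p` enters the ideal, and dually the orbit sum of `T⁻_p` counts the
steps at which `p` leaves it. Along a cycle `p` enters as often as it leaves.
-/

namespace CDEPaper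

section Toggles

variable {α : Type*} [PartialOrder α] {p x : α} {I J : OIdeal α}

/-- `Tplus p` and `Tminus p` are the indicators of `CanToggleIn p` and `CanToggleOut p`. -/
def CanToggleIn (p : α) (I : OIdeal α) : Prop := p ∉ I.1 ∧ IsLowerSet (I.1 ∪ {p})

def CanToggleOut (p : α) (I : OIdeal α) : Prop := p ∈ I.1 ∧ IsLowerSet (I.1 \ {p})

lemma toggle_eq_dite :
    toggle p I = if h : IsLowerSet (symmDiff I.1 {p}) then ⟨symmDiff I.1 {p}, h⟩ else I := by
  by_cases hp : p ∈ I.1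
  · have hI : symmDiff I.1 {p} = I.1 \ {p} := by
      ext y; by_cases hy : y = p <;> simp [Set.mem_symmDiff, hy, hp]
    simp only [toggle, hI, hp, not_true_eq_false, false_and, dite_false, true_and]
  · have hI : symmDiff I.1 {p} = I.1 ∪ {p} := by
      ext y; by_cases hy : y = p <;> simp [Set.mem_symmDiff, hy, hp]
    simp only [toggle, hI, hp, not_false_eq_true, true_and, false_and, dite_false]

lemma toggle_involutive (p : α) : Function.Involutive (toggle p) := by
  intro I
  by_cases h : IsLowerSet (symmDiff I.1 {p})
  · rw [toggle_eq_dite (I := I), dif_pos h, toggle_eq_dite]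
    simp [symmDiff_symmDiff_cancel_right, I.2]
  · rw [toggle_eq_dite (I := I), dif_neg h, toggle_eq_dite, dif_neg h]

lemma mem_toggle_of_ne (hx : x ≠ p) (I : OIdeal α) : x ∈ (toggle p I).1 ↔ x ∈ I.1 := by
  rw [toggle_eq_dite]
  split_ifs <;> simp [Set.mem_symmDiff, hx]

lemma canToggleIn_iff_mem_toggle : CanToggleIn p I ↔ p ∉ I.1 ∧ p ∈ (toggle p I).1 := by
  unfold CanToggleIn toggle
  split_ifs <;> (try simp only [Set.mem_union, Set.mem_sdiff, Set.mem_singleton_iff]) <;> tauto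

lemma canToggleOut_iff_notMem_toggle : CanToggleOut p I ↔ p ∈ I.1 ∧ p ∉ (toggle p I).1 := by
  unfold CanToggleOut toggle
  split_ifs <;> (try simp only [Set.mem_union, Set.mem_sdiff, Set.mem_singleton_iff]) <;> tauto

lemma canToggleIn_iff_forall_covBy [IsStronglyCoatomic α] :
    CanToggleIn p I ↔ p ∉ I.1 ∧ ∀ q, q ⋖ p → q ∈ I.1 := by
  refine and_congr_right fun hp => ⟨fun h q hq => ?_, fun h a b hab hb => ?_⟩
  · exact (h hq.le (Or.inr rfl)).resolve_right hq.ne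
  · rcases hb with hb | rfl
    · exact Or.inl (I.2 hab hb)
    · rcases hab.eq_or_lt with rfl | hlt
      · exact Or.inr rfl
      · obtain ⟨q, haq, hq⟩ := exists_le_covBy_of_lt hlt
        exact Or.inl (I.2 haq (h q hq))

lemma canToggleOut_iff_forall_covBy [IsStronglyAtomic α] :
    CanToggleOut p I ↔ p ∈ I.1 ∧ ∀ s, p ⋖ s → s ∉ I.1 := by
  refine and_congr_right fun hp => ⟨fun h s hs hsI => ?_, fun h a b hab hb => ?_⟩
  · exact (h hs.le ⟨hsI, hs.ne'⟩).2 rfl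
  · refine ⟨I.2 hab hb.1, fun (hbp : b = p) => hb.2 ?_⟩
    subst hbp
    by_contra hab'
    obtain ⟨s, hs, hsa⟩ := exists_covBy_le_of_lt (lt_of_le_of_ne hab (Ne.symm hab'))
    exact h s hs (I.2 hsa hb.1)

lemma canToggleIn_congr [IsStronglyCoatomic α] (hp : p ∈ I.1 ↔ p ∈ J.1)
    (hcov : ∀ q, q ⋖ p → (q ∈ I.1 ↔ q ∈ J.1)) : CanToggleIn p I ↔ CanToggleIn p J := by
  simp only [canToggleIn_iff_forall_covBy, hp]
  exact and_congr_right fun _ => forall₂_congr hcov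

lemma canToggleOut_congr [IsStronglyAtomic α] (hp : p ∈ I.1 ↔ p ∈ J.1)
    (hcov : ∀ s, p ⋖ s → (s ∈ I.1 ↔ s ∈ J.1)) : CanToggleOut p I ↔ CanToggleOut p J := by
  simp only [canToggleOut_iff_forall_covBy, hp]
  exact and_congr_right fun _ => forall₂_congr fun s hs => not_congr (hcov s hs)

end Toggles

section ToggleSequences

variable {α : Type*} [PartialOrder α] {p x : α} {L L₁ L₂ : List α}

lemma mem_applyToggles_of_notMem (hx : x ∉ L) (I : OIdeal α) :
    x ∈ (applyToggles L I).1 ↔ x ∈ I.1 := by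
  induction L generalizing I with
  | nil => rfl
  | cons q L ih =>
    rw [List.mem_cons, not_or] at hx
    exact (ih hx.2 (toggle q I)).trans (mem_toggle_of_ne hx.1 I)

lemma applyToggles_injective (L : List α) : Function.Injective (applyToggles L) := by
  induction L with
  | nil => exact Function.injective_id
  | cons q L ih => exact fun I J h => (toggle_involutive q).injective (ih h)

lemma applyToggles_append_cons (I : OIdeal α) :
    applyToggles (L₁ ++ p :: L₂) I = applyToggles L₂ (toggle p (applyToggles L₁ I)) := by
  simp only [applyToggles, List.foldl_append, List.foldl_cons]

lemma canToggleIn_iff_of_forall_covBy_notMem_left [IsStronglyCoatomic α] (hp₁ : p ∉ L₁)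
    (hp₂ : p ∉ L₂) (hcov : ∀ q, q ⋖ p → q ∉ L₁) (I : OIdeal α) :
    CanToggleIn p I ↔ p ∉ I.1 ∧ p ∈ (applyToggles (L₁ ++ p :: L₂) I).1 := by
  rw [applyToggles_append_cons, mem_applyToggles_of_notMem hp₂,
    canToggleIn_congr (mem_applyToggles_of_notMem hp₁ I).symm
      (fun q hq => (mem_applyToggles_of_notMem (hcov q hq) I).symm),
    canToggleIn_iff_mem_toggle, mem_applyToggles_of_notMem hp₁]

lemma canToggleIn_applyToggles_iff_of_forall_covBy_notMem_right [IsStronglyCoatomic α]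
    (hp₁ : p ∉ L₁) (hp₂ : p ∉ L₂) (hcov : ∀ q, q ⋖ p → q ∉ L₂) (I : OIdeal α) :
    CanToggleIn p (applyToggles (L₁ ++ p :: L₂) I) ↔
      p ∈ I.1 ∧ p ∉ (applyToggles (L₁ ++ p :: L₂) I).1 := by
  rw [applyToggles_append_cons, canToggleIn_congr (mem_applyToggles_of_notMem hp₂ _)
      (fun q hq => mem_applyToggles_of_notMem (hcov q hq) _),
    canToggleIn_iff_mem_toggle, toggle_involutive, mem_applyToggles_of_notMem hp₂,
    mem_applyToggles_of_notMem hp₁, and_comm]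

lemma canToggleOut_iff_of_forall_covBy_notMem_left [IsStronglyAtomic α] (hp₁ : p ∉ L₁)
    (hp₂ : p ∉ L₂) (hcov : ∀ s, p ⋖ s → s ∉ L₁) (I : OIdeal α) :
    CanToggleOut p I ↔ p ∈ I.1 ∧ p ∉ (applyToggles (L₁ ++ p :: L₂) I).1 := by
  rw [applyToggles_append_cons, mem_applyToggles_of_notMem hp₂,
    canToggleOut_congr (mem_applyToggles_of_notMem hp₁ I).symm
      (fun s hs => (mem_applyToggles_of_notMem (hcov s hs) I).symm),
    canToggleOut_iff_notMem_toggle, mem_applyToggles_of_notMem hp₁]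

lemma canToggleOut_applyToggles_iff_of_forall_covBy_notMem_right [IsStronglyAtomic α]
    (hp₁ : p ∉ L₁) (hp₂ : p ∉ L₂) (hcov : ∀ s, p ⋖ s → s ∉ L₂) (I : OIdeal α) :
    CanToggleOut p (applyToggles (L₁ ++ p :: L₂) I) ↔
      p ∉ I.1 ∧ p ∈ (applyToggles (L₁ ++ p :: L₂) I).1 := by
  rw [applyToggles_append_cons, canToggleOut_congr (mem_applyToggles_of_notMem hp₂ _)
      (fun s hs => mem_applyToggles_of_notMem (hcov s hs) _),
    canToggleOut_iff_notMem_toggle, toggle_involutive, mem_applyToggles_of_notMem hp₂,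
    mem_applyToggles_of_notMem hp₁, and_comm]

end ToggleSequences

section Orbits

variable {β : Type*} {Φ : β → β} {x : β}

lemma mapsTo_orbit : Set.MapsTo Φ (orbit Φ x) (orbit Φ x) := by
  rintro _ ⟨n, rfl⟩
  exact ⟨n + 1, Function.iterate_succ_apply' Φ n x⟩

lemma finsum_mem_orbit_comp {M : Type*} [AddCommMonoid M] (hfin : (orbit Φ x).Finite)
    (hinj : Set.InjOn Φ (orbit Φ x)) (F : β → M) :
    ∑ᶠ y ∈ orbit Φ x, F (Φ y) = ∑ᶠ y ∈ orbit Φ x, F y :=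
  finsum_mem_eq_of_bijOn Φ ((hfin.injOn_iff_bijOn_of_mapsTo mapsTo_orbit).mp hinj)
    fun _ _ => rfl

lemma finsum_mem_orbit_entries_eq_exits (hfin : (orbit Φ x).Finite)
    (hinj : Set.InjOn Φ (orbit Φ x)) (m : β → Prop) :
    ∑ᶠ y ∈ orbit Φ x, (if ¬m y ∧ m (Φ y) then (1 : ℝ) else 0) =
      ∑ᶠ y ∈ orbit Φ x, (if m y ∧ ¬m (Φ y) then (1 : ℝ) else 0) := by
  have hdiff : ∀ y, ((if ¬m y ∧ m (Φ y) then (1 : ℝ) else 0) -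
      if m y ∧ ¬m (Φ y) then 1 else 0) = (if m (Φ y) then 1 else 0) - if m y then 1 else 0 := by
    intro y
    by_cases hy : m y <;> by_cases hΦy : m (Φ y) <;> simp [hy, hΦy]
  rw [← sub_eq_zero, ← finsum_mem_sub_distrib _ _ hfin, finsum_mem_congr rfl fun y _ => hdiff y,
    finsum_mem_sub_distrib _ _ hfin, finsum_mem_orbit_comp hfin hinj fun y => if m y then 1 else 0,
    sub_self]

lemma expect_orbitDist (Φ : β → β) (x : β) (f : β → ℝ) :
    expect (orbitDist Φ x) f = (Nat.card (orbit Φ x) : ℝ)⁻¹ * ∑ᶠ y ∈ orbit Φ x, f y := by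
  rw [expect, mul_finsum_mem, finsum_mem_def]
  refine finsum_congr fun y => ?_
  by_cases hy : y ∈ orbit Φ x <;> simp [orbitDist, hy]

end Orbits

theorem finsum_mem_orbit_Tplus_eq_Tminus {α : Type*} [PartialOrder α] [Finite α] {p : α}
    {L₁ L₂ : List α} (hp₁ : p ∉ L₁) (hp₂ : p ∉ L₂)
    (hlower : (∀ q, q ⋖ p → q ∉ L₁) ∨ (∀ q, q ⋖ p → q ∉ L₂))
    (hupper : (∀ s, p ⋖ s → s ∉ L₁) ∨ (∀ s, p ⋖ s → s ∉ L₂)) (I₀ : OIdeal α) :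
    ∑ᶠ I ∈ orbit (applyToggles (L₁ ++ p :: L₂)) I₀, Tplus p I =
      ∑ᶠ I ∈ orbit (applyToggles (L₁ ++ p :: L₂)) I₀, Tminus p I := by
  set Φ := applyToggles (L₁ ++ p :: L₂)
  have hfin : (orbit Φ I₀).Finite := Set.toFinite _
  have hinj : Set.InjOn Φ (orbit Φ I₀) := (applyToggles_injective _).injOn
  have hentries := finsum_mem_orbit_entries_eq_exits hfin hinj (p ∈ ·.1)
  have hplus : ∑ᶠ I ∈ orbit Φ I₀, Tplus p I =
      ∑ᶠ I ∈ orbit Φ I₀, (if p ∉ I.1 ∧ p ∈ (Φ I).1 then (1 : ℝ) else 0) := by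
    rcases hlower with h | h
    · exact finsum_mem_congr rfl fun I _ =>
        if_congr (canToggleIn_iff_of_forall_covBy_notMem_left hp₁ hp₂ h I) rfl rfl
    · rw [← finsum_mem_orbit_comp hfin hinj, hentries]
      exact finsum_mem_congr rfl fun I _ =>
        if_congr (canToggleIn_applyToggles_iff_of_forall_covBy_notMem_right hp₁ hp₂ h I) rfl rfl
  have hminus : ∑ᶠ I ∈ orbit Φ I₀, Tminus p I =
      ∑ᶠ I ∈ orbit Φ I₀, (if p ∈ I.1 ∧ p ∉ (Φ I).1 then (1 : ℝ) else 0) := by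
    rcases hupper with h | h
    · exact finsum_mem_congr rfl fun I _ =>
        if_congr (canToggleOut_iff_of_forall_covBy_notMem_left hp₁ hp₂ h I) rfl rfl
    · rw [← finsum_mem_orbit_comp hfin hinj, ← hentries]
      exact finsum_mem_congr rfl fun I _ =>
        if_congr (canToggleOut_applyToggles_iff_of_forall_covBy_notMem_right hp₁ hp₂ h I) rfl rfl
  rw [hplus, hminus, hentries]

lemma forall_notMem_left_or_right_of_pairwise {α β : Type*} [PartialOrder β] {ρ : α → β}
    {p : α} {L₁ L₂ : List α} (hL : (L₁ ++ p :: L₂).Pairwise fun a b => ρ b ≤ ρ a)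
    {P : α → Prop} (hconst : ∀ x y, P x → P y → ρ x = ρ y) (hne : ∀ x, P x → ρ x ≠ ρ p) :
    (∀ x, P x → x ∉ L₁) ∨ (∀ x, P x → x ∉ L₂) := by
  by_contra! ⟨⟨x, hx, hx₁⟩, ⟨y, hy, hy₂⟩⟩
  rw [List.pairwise_append, List.pairwise_cons] at hL
  have hpx : ρ p ≤ ρ x := hL.2.2 x hx₁ p List.mem_cons_self
  have hyp : ρ y ≤ ρ p := hL.2.1.1 y hy₂
  exact hne y hy (le_antisymm hyp (hconst x y hx hy ▸ hpx))

theorem statement18_general (α : Type*) [Finite α] [PartialOrder α] (rk : α → ℕ) (r : ℕ)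
    (hcov : ∀ p q : α, p ⋖ q → rk q = rk p + 1)
    (hler : ∀ p, rk p ≤ r)
    (σ : Equiv.Perm (Fin (r + 1)))
    (L : List α) (hnodup : L.Nodup) (hfull : ∀ p : α, p ∈ L)
    (horder : ∀ s t : Fin L.length, s ≤ t →
      ((σ.symm ⟨rk (L.get t), Nat.lt_succ_of_le (hler _)⟩ : Fin (r + 1)) : ℕ) ≤
        ((σ.symm ⟨rk (L.get s), Nat.lt_succ_of_le (hler _)⟩ : Fin (r + 1)) : ℕ))
    (I₀ : OIdeal α) :
    ToggleSymmetric (orbitDist (applyToggles L) I₀) ∧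
    (∀ p : α,
      (∑ᶠ (J : OIdeal α),
        if J ∈ orbit (applyToggles L) I₀ then Tplus p J - Tminus p J else 0) = 0) := by
  set ρ : α → ℕ := fun x => σ.symm ⟨rk x, Nat.lt_succ_of_le (hler x)⟩
  have hρ : ∀ x y, ρ x = ρ y ↔ rk x = rk y := fun x y => by
    simp only [ρ, Fin.val_inj, σ.symm.injective.eq_iff, Fin.mk.injEq]
  have hpair : L.Pairwise fun a b => ρ b ≤ ρ a :=
    List.pairwise_iff_get.mpr fun s t hst => horder s t hst.le
  have hsum : ∀ p, ∑ᶠ J ∈ orbit (applyToggles L) I₀, Tplus p J =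
      ∑ᶠ J ∈ orbit (applyToggles L) I₀, Tminus p J := by
    intro p
    obtain ⟨L₁, L₂, rfl⟩ := List.append_of_mem (hfull p)
    have hp : p ∉ L₁ ∧ p ∉ L₂ := by
      simpa using (List.nodup_cons.mp (List.nodup_middle.mp hnodup)).1
    have hside : ∀ P : α → Prop, (∀ x y, P x → P y → rk x = rk y) →
        (∀ x, P x → rk x ≠ rk p) → (∀ x, P x → x ∉ L₁) ∨ (∀ x, P x → x ∉ L₂) :=
      fun P hconst hne => forall_notMem_left_or_right_of_pairwise hpair
        (fun x y hx hy => (hρ x y).2 (hconst x y hx hy)) fun x hx h => hne x hx ((hρ x p).1 h)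
    refine finsum_mem_orbit_Tplus_eq_Tminus hp.1 hp.2 (hside _ ?_ ?_) (hside _ ?_ ?_) I₀
    · intro x y hx hy; have := hcov x p hx; have := hcov y p hy; omega
    · intro x hx; have := hcov x p hx; omega
    · intro x y hx hy; have := hcov p x hx; have := hcov p y hy; omega
    · intro x hx; have := hcov p x hx; omega
  refine ⟨fun p => by rw [expect_orbitDist, expect_orbitDist, hsum p], fun p => ?_⟩
  rw [← finsum_congr fun J => Set.indicator_apply _ (fun J => Tplus p J - Tminus p J) J,
    ← finsum_mem_def, finsum_mem_sub_distrib _ _ (Set.toFinite _), hsum p, sub_self]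

/-- Lemma `lem:gengyrmotiontogsym`.  Let `P` be a finite ranked poset with
rank function `rk` taking values in `{0, 1, …, r}`, and let `σ` be a permutation of
`{0, 1, …, r}`.  Let `Φ_{row(σ)} = τ_{σ(0)} ∘ τ_{σ(1)} ∘ ⋯ ∘ τ_{σ(r)}` be the rank-permuted
rowmotion, realized as the composition of the toggles along any list `L` enumerating the
elements of `P` in which the values `σ⁻¹(rk(·))` are weakly decreasing (so the elements of
rank `σ(r)` are toggled first, then those of rank `σ(r-1)`, etc.; toggles of equal rank
commute).  Then, for any `I₀`, the probability distribution on `J(P)` that is uniform on the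
`Φ_{row(σ)}`-orbit of `I₀` and zero outside of it is toggle-symmetric; equivalently, for every
`p ∈ P` the signed toggleability statistic `T_p = T⁺_p - T⁻_p` sums to zero along the orbit. -/
theorem statement18 (α : Type*) [Finite α] [PartialOrder α] (rk : α → ℕ) (r : ℕ)
    (h0 : ∃ p, rk p = 0)
    (hcov : ∀ p q : α, p ⋖ q → rk q = rk p + 1)
    (hler : ∀ p, rk p ≤ r)
    (σ : Equiv.Perm (Fin (r + 1)))
    (L : List α) (hnodup : L.Nodup) (hfull : ∀ p : α, p ∈ L)
    (horder : ∀ s t : Fin L.length, s ≤ t →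
      ((σ.symm ⟨rk (L.get t), Nat.lt_succ_of_le (hler _)⟩ : Fin (r + 1)) : ℕ) ≤
        ((σ.symm ⟨rk (L.get s), Nat.lt_succ_of_le (hler _)⟩ : Fin (r + 1)) : ℕ))
    (I₀ : OIdeal α) :
    ToggleSymmetric (orbitDist (applyToggles L) I₀) ∧
    (∀ p : α,
      (∑ᶠ (J : OIdeal α),
        if J ∈ orbit (applyToggles L) I₀ then Tplus p J - Tminus p J else 0) = 0) :=
  statement18_general α rk r hcov hler σ L hnodup hfull horder I₀

end CDEPaper
end
end
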